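/- Let F be a genealogical tree in ℤ^m. Then ⟨F⟩ := span_ℚ(F) ∩ ℤ^m equals span_ℤ(F), i.e. every integer vector that is a rational linear combination of the family vectors is already an integer linear combination of them. -/

import Mathlib

/-- The (1-indexed) generation number of a basis index `j` of `ℤ^(N·2^(N−1))`:
`e_j ∈ A_i` iff `(i−1)·2^(N−1) + 1 ≤ j + 1 ≤ i·2^(N−1)` (0-indexed `j`). -/
def genOf (N : ℕ) (j : Fin (N * 2 ^ (N - 1))) : ℕ := (j : ℕ) / 2 ^ (N - 1) + 1

/-- An abstract family: two distinct parents in generation `gen` and two distinct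
children in generation `gen + 1`, with `1 ≤ gen ≤ N − 1`. -/
structure AbstractFamily (N : ℕ) where
  gen : ℕ
  j1 : Fin (N * 2 ^ (N - 1))
  j2 : Fin (N * 2 ^ (N - 1))
  j3 : Fin (N * 2 ^ (N - 1))
  j4 : Fin (N * 2 ^ (N - 1))
  gen_pos : 1 ≤ gen
  gen_le : gen ≤ N - 1
  hj1 : genOf N j1 = gen
  hj2 : genOf N j2 = gen
  hj3 : genOf N j3 = gen + 1
  hj4 : genOf N j4 = gen + 1
  parents_ne : j1 ≠ j2
  children_ne : j3 ≠ j4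

/-- The vector `e_{j₁} + e_{j₂} − e_{j₃} − e_{j₄} ∈ ℤ^m` associated to an abstract family. -/
def AbstractFamily.vec {N : ℕ} (f : AbstractFamily N) : Fin (N * 2 ^ (N - 1)) → ℤ :=
  Pi.single f.j1 1 + Pi.single f.j2 1 - Pi.single f.j3 1 - Pi.single f.j4 1

/-- `j` is a parent in the family `f`. -/
def AbstractFamily.isParent {N : ℕ} (f : AbstractFamily N)
    (j : Fin (N * 2 ^ (N - 1))) : Prop := j = f.j1 ∨ j = f.j2

/-- `j` is a child in the family `f`. -/
def AbstractFamily.isChild {N : ℕ} (f : AbstractFamily N)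
    (j : Fin (N * 2 ^ (N - 1))) : Prop := j = f.j3 ∨ j = f.j4

/-- A genealogical tree: every basis vector of generation `i ≤ N−1` is a parent in
exactly one family of generation number `i`; every basis vector of generation `i ≥ 2`
is a child in exactly one family of generation number `i−1`; and the sibling and the
spouse of a basis vector never coincide. -/
structure IsGenTree (N : ℕ) (F : Set (AbstractFamily N)) : Prop where
  parent_unique : ∀ j : Fin (N * 2 ^ (N - 1)), genOf N j ≤ N - 1 →
    ∃! f : AbstractFamily N, f ∈ F ∧ f.gen = genOf N j ∧ f.isParent j
  child_unique : ∀ j : Fin (N * 2 ^ (N - 1)), 2 ≤ genOf N j →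
    ∃! f : AbstractFamily N, f ∈ F ∧ f.gen = genOf N j - 1 ∧ f.isChild j
  sibling_ne_spouse : ∀ f ∈ F, ∀ g ∈ F, ∀ c s p : Fin (N * 2 ^ (N - 1)),
    ((c = f.j3 ∧ s = f.j4) ∨ (c = f.j4 ∧ s = f.j3)) →
    ((c = g.j1 ∧ p = g.j2) ∨ (c = g.j2 ∧ p = g.j1)) → s ≠ p

/-!
Write an integer vector `lam` as a rational combination `∑ l_g · g.vec` of families of the tree.
At the first child `c` of a family `f`, the family `f` is the only one in which `c` is a child, and
at most one family `u` (of the next generation) has `c` as a parent, so `lam c = l_u - l_f`, or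
`lam c = - l_f` when there is no such `u`. Hence integrality of the coefficients propagates from
the last generation downwards, and the rational combination is an integer one.
-/

instance AbstractFamily.decidableIsParent {N : ℕ} (f : AbstractFamily N)
    (j : Fin (N * 2 ^ (N - 1))) : Decidable (f.isParent j) :=
  inferInstanceAs (Decidable (j = f.j1 ∨ j = f.j2))

instance AbstractFamily.decidableIsChild {N : ℕ} (f : AbstractFamily N)
    (j : Fin (N * 2 ^ (N - 1))) : Decidable (f.isChild j) :=
  inferInstanceAs (Decidable (j = f.j3 ∨ j = f.j4))

theorem Finsupp.linearCombination_mapRange_intCast {ι κ : Type*} (v : ι → κ → ℤ)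
    (l : ι →₀ ℤ) :
    Finsupp.linearCombination ℚ (fun i k => (v i k : ℚ)) (l.mapRange Int.cast Int.cast_zero) =
      fun k => (Finsupp.linearCombination ℤ v l k : ℚ) := by
  ext k
  rw [Finsupp.linearCombination_apply, Finsupp.linearCombination_apply,
    Finsupp.sum_mapRange_index fun _ => zero_smul ℚ (fun k => (v _ k : ℚ))]
  simp [Finsupp.sum, Finset.sum_apply]

theorem Finsupp.sum_support_ite_eq {α M : Type*} [AddCommMonoid M] (l : α →₀ M)
    {p : α → Prop} [DecidablePred p] {a : α} (ha : p a)
    (h : ∀ b ∈ l.support, p b → b = a) :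
    ∑ b ∈ l.support, (if p b then l b else 0) = l a := by
  rw [Finset.sum_eq_single a (fun b hb hba => if_neg fun hp => hba (h b hb hp))
    (fun ha' => by rw [Finsupp.notMem_support_iff.1 ha', ite_self])]
  exact if_pos ha

theorem Submodule.intCast_mem_span_iff_of_coeff_integral {ι κ : Type*} (v : ι → κ → ℤ)
    (s : Set ι) (x : κ → ℤ)
    (hcoeff : ∀ l ∈ Finsupp.supported ℚ ℚ s,
      Finsupp.linearCombination ℚ (fun i k => (v i k : ℚ)) l = (fun k => (x k : ℚ)) →
        ∀ i, ∃ n : ℤ, (n : ℚ) = l i) :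
    (fun k => (x k : ℚ)) ∈ Submodule.span ℚ ((fun i k => (v i k : ℚ)) '' s) ↔
      x ∈ Submodule.span ℤ (v '' s) := by
  simp only [Finsupp.mem_span_image_iff_linearCombination, Finsupp.mem_supported]
  constructor
  · rintro ⟨l, hls, hl⟩
    choose n hn using hcoeff l hls hl
    set l' : ι →₀ ℤ := l.mapRange Rat.num Rat.num_zero
    have hl' : l'.mapRange Int.cast Int.cast_zero = l := by
      ext i
      simp [l', ← hn i]
    refine ⟨l', (Finset.coe_subset.2 Finsupp.support_mapRange).trans hls, funext fun k => ?_⟩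
    have := congrFun (Finsupp.linearCombination_mapRange_intCast v l') k
    rw [hl', hl] at this
    exact Int.cast_injective (α := ℚ) this.symm
  · rintro ⟨l, hls, rfl⟩
    exact ⟨l.mapRange Int.cast Int.cast_zero,
      (Finset.coe_subset.2 Finsupp.support_mapRange).trans hls,
      Finsupp.linearCombination_mapRange_intCast v l⟩

namespace AbstractFamily

variable {N : ℕ} (f : AbstractFamily N) {j : Fin (N * 2 ^ (N - 1))}

theorem genOf_of_isParent (h : f.isParent j) : genOf N j = f.gen := by
  rcases h with rfl | rfl
  exacts [f.hj1, f.hj2]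

theorem genOf_of_isChild (h : f.isChild j) : genOf N j = f.gen + 1 := by
  rcases h with rfl | rfl
  exacts [f.hj3, f.hj4]

theorem vec_apply (j : Fin (N * 2 ^ (N - 1))) :
    f.vec j = (if f.isParent j then 1 else 0) - (if f.isChild j then 1 else 0) := by
  have := f.parents_ne
  have := f.children_ne
  simp only [vec, isParent, isChild, Pi.sub_apply, Pi.add_apply, Pi.single_apply]
  split_ifs <;> simp_all

theorem linearCombination_vec_apply (l : AbstractFamily N →₀ ℚ) (j : Fin (N * 2 ^ (N - 1))) :
    Finsupp.linearCombination ℚ (fun g k => (g.vec k : ℚ)) l j =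
      ∑ g ∈ l.support, (if g.isParent j then l g else 0) -
        ∑ g ∈ l.support, (if g.isChild j then l g else 0) := by
  rw [Finsupp.linearCombination_apply, Finsupp.sum, Finset.sum_apply, ← Finset.sum_sub_distrib]
  refine Finset.sum_congr rfl fun g _ => ?_
  simp only [Pi.smul_apply, smul_eq_mul, vec_apply]
  split_ifs <;> simp

end AbstractFamily

namespace IsGenTree

variable {N : ℕ} {F : Set (AbstractFamily N)} (hF : IsGenTree N F)
  {f g : AbstractFamily N} {j : Fin (N * 2 ^ (N - 1))}
include hF

theorem eq_of_isParent (hf : f ∈ F) (hg : g ∈ F) (hfj : f.isParent j) (hgj : g.isParent j) :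
    f = g :=
  (hF.parent_unique j (f.genOf_of_isParent hfj ▸ f.gen_le)).unique
    ⟨hf, (f.genOf_of_isParent hfj).symm, hfj⟩ ⟨hg, (g.genOf_of_isParent hgj).symm, hgj⟩

theorem eq_of_isChild (hf : f ∈ F) (hg : g ∈ F) (hfj : f.isChild j) (hgj : g.isChild j) :
    f = g := by
  have hfgen := f.genOf_of_isChild hfj
  have hggen := g.genOf_of_isChild hgj
  have := f.gen_pos
  exact (hF.child_unique j (by omega)).unique ⟨hf, by omega, hfj⟩ ⟨hg, by omega, hgj⟩

theorem exists_intCast_eq_coeff {l : AbstractFamily N →₀ ℚ} (hl : ↑l.support ⊆ F)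
    {lam : Fin (N * 2 ^ (N - 1)) → ℤ}
    (hlam : Finsupp.linearCombination ℚ (fun g k => (g.vec k : ℚ)) l = fun k => (lam k : ℚ))
    (f : AbstractFamily N) : ∃ n : ℤ, (n : ℚ) = l f := by
  by_cases hf : f ∈ F
  swap
  · exact ⟨0, by rw [Int.cast_zero, Finsupp.notMem_support_iff.1 fun h => hf (hl h)]⟩
  have hcoord := congrFun hlam f.j3
  rw [AbstractFamily.linearCombination_vec_apply, Finsupp.sum_support_ite_eq l (Or.inl rfl)
    fun g hg hgj => hF.eq_of_isChild (hl hg) hf hgj (Or.inl rfl)] at hcoord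
  by_cases hu : ∃ u ∈ F, u.isParent f.j3
  · obtain ⟨u, huF, hup⟩ := hu
    have hgen : u.gen = f.gen + 1 :=
      (u.genOf_of_isParent hup).symm.trans (f.genOf_of_isChild (Or.inl rfl))
    rw [Finsupp.sum_support_ite_eq l hup
      fun g hg hgp => hF.eq_of_isParent (hl hg) huF hgp hup] at hcoord
    obtain ⟨n, hn⟩ := exists_intCast_eq_coeff hl hlam u
    exact ⟨n - lam f.j3, by push_cast; linarith⟩
  · push Not at hu
    rw [Finset.sum_ite_of_false fun g hg => hu g (hl hg), Finset.sum_const_zero] at hcoord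
    exact ⟨-lam f.j3, by push_cast; linarith⟩
termination_by N - 1 - f.gen
decreasing_by have := u.gen_le; omega

end IsGenTree

theorem stmt7_general (N : ℕ) (F : Set (AbstractFamily N)) (hF : IsGenTree N F)
    (lam : Fin (N * 2 ^ (N - 1)) → ℤ) :
    (fun j => (lam j : ℚ)) ∈
        Submodule.span ℚ ((fun f : AbstractFamily N => fun j => ((f.vec j : ℚ))) '' F) ↔
      lam ∈ Submodule.span ℤ (AbstractFamily.vec '' F) :=
  Submodule.intCast_mem_span_iff_of_coeff_integral _ F lam
    fun _ hl hlam => hF.exists_intCast_eq_coeff hl hlam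

/-- For a genealogical tree `F`, the lattice `⟨F⟩ = span_ℚ(F) ∩ ℤ^m` equals the
integer span of the family vectors: an integer vector is a rational linear combination
of the family vectors iff it is an integer linear combination of them. -/
theorem stmt7 (N : ℕ) (hN : 2 ≤ N) (F : Set (AbstractFamily N)) (hF : IsGenTree N F)
    (lam : Fin (N * 2 ^ (N - 1)) → ℤ) :
    (fun j => (lam j : ℚ)) ∈
        Submodule.span ℚ ((fun f : AbstractFamily N => fun j => ((f.vec j : ℚ))) '' F) ↔
      lam ∈ Submodule.span ℤ (AbstractFamily.vec '' F) :=
  stmt7_general N F hF lam
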